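/- Let l ≥ 1 be an integer and let 0 ≤ k ≤ l−1. Then the linear span (over ℝ) of the two-variable polynomials {F^{(l,m)} : m = l, l−1, …, l−k} equals the linear span of the monomials {y^{l−1}, x·y^{l−2}, …, x^k·y^{l−k−1}}, i.e., of {x^j y^{l−1−j} : 0 ≤ j ≤ k}. -/

import Mathlib

/-!
Expanding `(x² + y²)^i`, `F^{(l,m)}` is a combination of the monomials `x^j y^(l-1-j)` with
`j ≤ l - m`, whose coefficient of `x^(l-m) y^(m-1)` is a positive multiple of `D_l^m(1,0)`.
By Rodrigues' formula, `2^l l! D_l^m(1,0)` is the `(l+m)`-th derivative of `(x² - 1)^l` at `1`, and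
Leibniz's rule applied to `(x - 1)^l (x + 1)^l` shows that this is positive. Hence the `F^{(l,l-j)}`
arise from the monomials by a triangular change of basis with nonzero diagonal, which preserves the
spans of initial segments.
-/

/-- The coefficient `γ_{lk}^{(m)} = (−1)^k 2^{−l} C(l,k) C(2l−2k,l) (l−2k)!/(l−2k−m)!`. -/
noncomputable def gam (l k m : ℕ) : ℝ :=
  (-1 : ℝ) ^ k * (2 : ℝ)⁻¹ ^ l * (l.choose k : ℝ) * ((2 * l - 2 * k).choose l : ℝ) *
    ((l - 2 * k).factorial : ℝ) / ((l - 2 * k - m).factorial : ℝ)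

/-- `D_l^m(x,y) = Σ_{k=0}^{⌊(l−m)/2⌋} γ_{lk}^{(m)} (x²+y²)^k x^{l−2k−m}`. -/
noncomputable def Dlm (l m : ℕ) (x y : ℝ) : ℝ :=
  ∑ k ∈ Finset.range ((l - m) / 2 + 1),
    gam l k m * (x ^ 2 + y ^ 2) ^ k * x ^ (l - 2 * k - m)

/-- `F^{(l,m)}(x,y) = √(2(l−m)!/(l+m)!) · m·y^{m−1} · D_l^m(x,y)`. -/
noncomputable def Flm (l m : ℕ) (x y : ℝ) : ℝ :=
  Real.sqrt (2 * ((l - m).factorial : ℝ) / ((l + m).factorial : ℝ)) *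
    ((m : ℝ) * y ^ (m - 1)) * Dlm l m x y

open Polynomial Finset

section EvalOneIterateDerivative

variable {R : Type*} [CommRing R]

theorem eval_one_iterate_derivative_X_sq_sub_one_pow {l m : ℕ} (hm : m ≤ l) :
    (derivative^[l + m] ((X ^ 2 - 1 : R[X]) ^ l)).eval 1 =
      ((l + m).choose m * l.descFactorial m * l.factorial * 2 ^ (l - m) : ℕ) := by
  have hfactor : (X ^ 2 - 1 : R[X]) = (X - C 1) * (X + C 1) := by simp only [map_one]; ring
  rw [hfactor, mul_pow, iterate_derivative_mul, eval_finsetSum, sum_eq_single m]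
  · simp only [Nat.add_sub_cancel, iterate_derivative_X_sub_pow, iterate_derivative_X_add_pow,
      Nat.sub_self, Nat.descFactorial_self, eval_mul, eval_pow, eval_add,
      eval_X, eval_C, nsmul_eq_mul, eval_natCast, eval_one, pow_zero]
    push_cast
    ring
  · intro k hk hkm
    rw [mem_range] at hk
    simp only [iterate_derivative_X_sub_pow, iterate_derivative_X_add_pow, eval_mul,
      eval_pow, eval_add, eval_sub, eval_X, eval_C, nsmul_eq_mul, eval_natCast, sub_self]
    rcases lt_or_gt_of_ne hkm with hlt | hgt
    · rw [Nat.descFactorial_eq_zero_iff_lt.mpr (by omega : l < l + m - k)]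
      simp
    · rw [zero_pow (by omega : l - (l + m - k) ≠ 0)]
      simp
  · intro h
    exact absurd (mem_range.mpr (by omega)) h

theorem eval_one_iterate_derivative_X_sq_sub_one_pow_eq_sum (l m : ℕ) :
    (derivative^[l + m] ((X ^ 2 - 1 : R[X]) ^ l)).eval 1 =
      ∑ i ∈ range ((l - m) / 2 + 1),
        (-1 : R) ^ i * l.choose i * ((2 * l - 2 * i).descFactorial (l + m) : ℕ) := by
  have hexpand : (X ^ 2 - 1 : R[X]) ^ l =
      ∑ i ∈ range (l + 1), C ((-1 : R) ^ i * l.choose i) * X ^ (2 * l - 2 * i) := by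
    rw [sub_eq_neg_add, add_pow]
    refine sum_congr rfl fun i _ => ?_
    rw [← pow_mul, show 2 * (l - i) = 2 * l - 2 * i by omega]
    simp only [map_mul, map_pow, map_neg, map_one, map_natCast]
    ring
  have hsub : range ((l - m) / 2 + 1) ⊆ range (l + 1) := by
    intro i hi
    simp only [mem_range] at hi ⊢
    omega
  rw [hexpand, iterate_derivative_sum, eval_finsetSum, ← sum_subset hsub]
  · refine sum_congr rfl fun i _ => ?_
    rw [iterate_derivative_C_mul, iterate_derivative_X_pow_eq_C_mul]
    simp
  · intro i hil hi
    simp only [mem_range] at hil hi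
    rw [iterate_derivative_C_mul, iterate_derivative_X_pow_eq_C_mul,
      Nat.descFactorial_eq_zero_iff_lt.mpr (by omega : 2 * l - 2 * i < l + m)]
    simp

end EvalOneIterateDerivative

theorem gam_eq {l m i : ℕ} (hm : m ≤ l) (hi : 2 * i ≤ l - m) :
    gam l i m = (-1) ^ i * l.choose i * ((2 * l - 2 * i).descFactorial (l + m) : ℕ) /
      (2 ^ l * l.factorial) := by
  have hchoose : (((2 * l - 2 * i).choose l * l.factorial * (l - 2 * i).factorial : ℕ) : ℝ) =
      (2 * l - 2 * i).factorial := by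
    rw [← Nat.choose_mul_factorial_mul_factorial (show l ≤ 2 * l - 2 * i by omega),
      show 2 * l - 2 * i - l = l - 2 * i by omega]
  have hdesc : (((2 * l - 2 * i).descFactorial (l + m) * (l - 2 * i - m).factorial : ℕ) : ℝ) =
      (2 * l - 2 * i).factorial := by
    rw [← Nat.factorial_mul_descFactorial (show l + m ≤ 2 * l - 2 * i by omega),
      show 2 * l - 2 * i - (l + m) = l - 2 * i - m by omega, mul_comm]
  push_cast at hchoose hdesc
  rw [gam, inv_pow]
  field_simp
  linear_combination (l.choose i : ℝ) * (hchoose - hdesc)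

theorem Dlm_one_zero {l m : ℕ} (hm : m ≤ l) :
    Dlm l m 1 0 = (derivative^[l + m] ((X ^ 2 - 1 : ℝ[X]) ^ l)).eval 1 / (2 ^ l * l.factorial) := by
  rw [eval_one_iterate_derivative_X_sq_sub_one_pow_eq_sum, sum_div, Dlm]
  refine sum_congr rfl fun i hi => ?_
  rw [gam_eq hm (by rw [mem_range] at hi; omega)]
  simp

theorem Dlm_one_zero_pos {l m : ℕ} (hm : m ≤ l) : 0 < Dlm l m 1 0 := by
  rw [Dlm_one_zero hm, eval_one_iterate_derivative_X_sq_sub_one_pow hm]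
  have hdesc : 0 < l.descFactorial m := Nat.descFactorial_pos.mpr hm
  have hchoose : 0 < (l + m).choose m := Nat.choose_pos (Nat.le_add_left m l)
  positivity

section Triangular

variable {K M : Type*} [Field K] [AddCommGroup M] [Module K M]

theorem span_singleton_sup_eq_of_sub_smul_mem {S : Submodule K M} {x y : M} {c : K} (hc : c ≠ 0)
    (h : x - c • y ∈ S) : K ∙ x ⊔ S = K ∙ y ⊔ S := by
  have hx : x ∈ K ∙ y ⊔ S :=
    Submodule.mem_sup.mpr ⟨c • y, Submodule.smul_mem _ c (Submodule.mem_span_singleton_self y),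
      x - c • y, h, add_sub_cancel _ _⟩
  have hy : y ∈ K ∙ x ⊔ S := by
    refine Submodule.mem_sup.mpr ⟨c⁻¹ • x, Submodule.smul_mem _ _
      (Submodule.mem_span_singleton_self x), -(c⁻¹ • (x - c • y)), S.neg_mem (S.smul_mem _ h), ?_⟩
    rw [smul_sub, smul_smul, inv_mul_cancel₀ hc, one_smul]
    abel
  exact le_antisymm (sup_le ((Submodule.span_singleton_le_iff_mem _ _).mpr hx) le_sup_right)
    (sup_le ((Submodule.span_singleton_le_iff_mem _ _).mpr hy) le_sup_right)

theorem span_image_Iio_eq_of_sub_smul_mem {e f : ℕ → M} {c : ℕ → K} {n : ℕ}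
    (hc : ∀ j < n, c j ≠ 0) (hf : ∀ j < n, f j - c j • e j ∈ Submodule.span K (e '' Set.Iio j)) :
    Submodule.span K (f '' Set.Iio n) = Submodule.span K (e '' Set.Iio n) := by
  induction n with
  | zero => simp
  | succ n ih =>
    have hn := Nat.lt_succ_self n
    rw [← Order.succ_eq_add_one, Order.Iio_succ_eq_insert, Set.image_insert_eq,
      Set.image_insert_eq, Submodule.span_insert, Submodule.span_insert,
      ih (fun j hj => hc j (hj.trans hn)) (fun j hj => hf j (hj.trans hn))]
    exact span_singleton_sup_eq_of_sub_smul_mem (hc n hn) (hf n hn)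

end Triangular

noncomputable def xyMonomial (l j : ℕ) : ℝ × ℝ → ℝ := fun q => q.1 ^ j * q.2 ^ (l - 1 - j)

theorem sq_add_sq_pow_mul_sub_xyMonomial_mem_span {l n i : ℕ} (hi : 2 * i ≤ n) (hn : n < l) :
    (fun q : ℝ × ℝ => (q.1 ^ 2 + q.2 ^ 2) ^ i * q.1 ^ (n - 2 * i) * q.2 ^ (l - 1 - n)) -
        xyMonomial l n ∈ Submodule.span ℝ (xyMonomial l '' Set.Iio n) := by
  have hexpand : (fun q : ℝ × ℝ => (q.1 ^ 2 + q.2 ^ 2) ^ i * q.1 ^ (n - 2 * i) * q.2 ^ (l - 1 - n)) =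
      ∑ a ∈ range (i + 1), (i.choose a : ℝ) • xyMonomial l (n - 2 * (i - a)) := by
    funext q
    simp only [add_pow, sum_mul, Finset.sum_apply, Pi.smul_apply, smul_eq_mul, xyMonomial]
    refine sum_congr rfl fun a ha => ?_
    rw [mem_range] at ha
    rw [show n - 2 * (i - a) = 2 * a + (n - 2 * i) by omega,
      show l - 1 - (2 * a + (n - 2 * i)) = 2 * (i - a) + (l - 1 - n) by omega]
    ring
  rw [hexpand, sum_range_succ, Nat.sub_self, Nat.mul_zero, Nat.sub_zero, Nat.choose_self,
    Nat.cast_one, one_smul, add_sub_cancel_right]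
  refine Submodule.sum_mem _ fun a ha => Submodule.smul_mem _ _ (Submodule.subset_span ?_)
  rw [mem_range] at ha
  exact ⟨n - 2 * (i - a), by simp only [Set.mem_Iio]; omega, rfl⟩

theorem Flm_eq_smul_sum {l m : ℕ} (hm : m ≤ l) :
    (fun q : ℝ × ℝ => Flm l m q.1 q.2) =
      (√(2 * ((l - m).factorial : ℝ) / ((l + m).factorial : ℝ)) * m) •
        ∑ i ∈ range ((l - m) / 2 + 1), gam l i m • fun q : ℝ × ℝ =>
          (q.1 ^ 2 + q.2 ^ 2) ^ i * q.1 ^ (l - m - 2 * i) * q.2 ^ (l - 1 - (l - m)) := by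
  funext q
  simp only [Flm, Dlm, Pi.smul_apply, Finset.sum_apply, smul_eq_mul, mul_sum]
  refine sum_congr rfl fun i _ => ?_
  rw [show l - 1 - (l - m) = m - 1 by omega, show l - m - 2 * i = l - 2 * i - m by omega]
  ring

theorem Flm_sub_smul_xyMonomial_mem_span {l m : ℕ} (hm0 : 0 < m) (hm : m ≤ l) :
    (fun q : ℝ × ℝ => Flm l m q.1 q.2) -
        (√(2 * ((l - m).factorial : ℝ) / ((l + m).factorial : ℝ)) * m * Dlm l m 1 0) •
          xyMonomial l (l - m) ∈ Submodule.span ℝ (xyMonomial l '' Set.Iio (l - m)) := by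
  have hD : Dlm l m 1 0 = ∑ i ∈ range ((l - m) / 2 + 1), gam l i m := by simp [Dlm]
  rw [Flm_eq_smul_sum hm, hD, mul_smul _ (∑ i ∈ _, gam l i m), sum_smul, ← smul_sub, ← sum_sub_distrib]
  refine Submodule.smul_mem _ _ (Submodule.sum_mem _ fun i hi => ?_)
  rw [mem_range] at hi
  rw [← smul_sub]
  exact Submodule.smul_mem _ _ (sq_add_sq_pow_mul_sub_xyMonomial_mem_span (by omega) (by omega))

/-- for `l ≥ 1` and `0 ≤ k ≤ l−1`, the span of `{F^{(l,m)} : l−k ≤ m ≤ l}`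
equals the span of the monomials `{xʲ y^{l−1−j} : 0 ≤ j ≤ k}`. -/
theorem stmt9 (l : ℕ) (hl : 1 ≤ l) (k : ℕ) (hk : k ≤ l - 1) :
    Submodule.span ℝ {f : ℝ × ℝ → ℝ | ∃ m : ℕ, l - k ≤ m ∧ m ≤ l ∧
        f = fun q => Flm l m q.1 q.2} =
      Submodule.span ℝ {f : ℝ × ℝ → ℝ | ∃ j : ℕ, j ≤ k ∧
        f = fun q => q.1 ^ j * q.2 ^ (l - 1 - j)} := by
  have hF : {f : ℝ × ℝ → ℝ | ∃ m : ℕ, l - k ≤ m ∧ m ≤ l ∧ f = fun q => Flm l m q.1 q.2} =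
      (fun j (q : ℝ × ℝ) => Flm l (l - j) q.1 q.2) '' Set.Iio (k + 1) := by
    ext f
    constructor
    · rintro ⟨m, hkm, hml, rfl⟩
      exact ⟨l - m, Set.mem_Iio.mpr (by omega), by simp only [Nat.sub_sub_self hml]⟩
    · rintro ⟨j, hj, rfl⟩
      exact ⟨l - j, by rw [Set.mem_Iio] at hj; omega, Nat.sub_le l j, rfl⟩
  have hE : {f : ℝ × ℝ → ℝ | ∃ j : ℕ, j ≤ k ∧ f = fun q => q.1 ^ j * q.2 ^ (l - 1 - j)} =
      xyMonomial l '' Set.Iio (k + 1) := by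
    ext f
    simp only [Set.mem_ofPred_eq, Set.mem_image, Set.mem_Iio, Nat.lt_add_one_iff]
    exact exists_congr fun j => and_congr_right fun _ => eq_comm
  rw [hF, hE]
  refine span_image_Iio_eq_of_sub_smul_mem
    (c := fun j => √(2 * ((l - (l - j)).factorial : ℝ) / ((l + (l - j)).factorial : ℝ)) *
      ((l - j : ℕ) : ℝ) * Dlm l (l - j) 1 0) (fun j hj => ?_) (fun j hj => ?_)
  · have hD := Dlm_one_zero_pos (Nat.sub_le l j)
    have hlj : 0 < l - j := by omega
    positivity
  · simpa only [Nat.sub_sub_self (by omega : j ≤ l)] using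
      Flm_sub_smul_xyMonomial_mem_span (by omega : 0 < l - j) (Nat.sub_le l j)
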